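/- arXiv:2512.02211 — 2 statements merged into one kernel-verified Lean document; each statement's English description precedes it below -/
import Mathlib

section
/- Let G be a finite nonabelian group. If 𝔠 ⊆ {C_G(g) : g ∈ G \ Z(G)} is an irredundant cover of G by centralizers of noncentral elements, then |𝔠| is at most the number of maximal elements of 𝒵(G) = {Z(C_G(g)) : g ∈ G \ Z(G)}. -/
/-!
Irredundancy gives every member `C_G(g)` of `𝔠` a private point `x`, lying in no other member; `x` is
noncentral since the centre lies in every member while `C_G(g)` is proper. Send `C_G(g)` to a maximal
element `Z(C_G(h))` of `𝒵(G)` above `Z(C_G(x))`. As `x ∈ Z(C_G(h))`, we get `C_G(h) ≤ C_G(x)`; so if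
`h` lies in the member `C_G(k)`, then `k ∈ C_G(h) ≤ C_G(x)`, i.e. `x ∈ C_G(k)`, and privacy forces
`C_G(k) = C_G(g)`. Thus `C_G(g)` is recovered from its maximal element and the assignment is injective.
-/

variable {G : Type*} [Group G] [Fintype G]

/-- The centralizer of an element `g` of `G`. -/
def centG (g : G) : Subgroup G := Subgroup.centralizer ({g} : Set G)

/-- `Z(g) = Z(C_G(g))`, the center of the centralizer of `g`, as a subgroup of `G`. -/
def zCent (g : G) : Subgroup G :=
  (Subgroup.center ↥(Subgroup.centralizer ({g} : Set G))).map
    (Subgroup.centralizer ({g} : Set G)).subtype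

/-- `𝒵(G)`. -/
def zCentSet (G : Type*) [Group G] : Set (Subgroup G) :=
  {H | ∃ g : G, g ∉ Subgroup.center G ∧ H = zCent g}

section Cover

variable {α β : Type*} [SetLike β α]

theorem exists_private_mem_of_irredundant {𝔠 : Finset β} (hcov : ∀ x : α, ∃ H ∈ 𝔠, x ∈ H)
    (hirr : ∀ 𝔡 : Finset β, 𝔡 ⊂ 𝔠 → ¬ ∀ x : α, ∃ H ∈ 𝔡, x ∈ H) {H : β} (hH : H ∈ 𝔠) :
    ∃ x ∈ H, ∀ K ∈ 𝔠, x ∈ K → K = H := by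
  classical
  obtain ⟨x, hx⟩ := not_forall.1 (hirr _ (Finset.erase_ssubset hH))
  have hprivate : ∀ K ∈ 𝔠, x ∈ K → K = H := fun K hK hxK =>
    by_contra fun hne => hx ⟨K, Finset.mem_erase.2 ⟨hne, hK⟩, hxK⟩
  obtain ⟨K, hK, hxK⟩ := hcov x
  exact ⟨x, hprivate K hK hxK ▸ hxK, hprivate⟩

end Cover

section Group

variable {G : Type*} [Group G]

theorem mem_centG_comm {a b : G} : a ∈ centG b ↔ b ∈ centG a := by
  simp only [centG, Subgroup.mem_centralizer_singleton_iff, eq_comm]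

theorem center_le_centG (g : G) : Subgroup.center G ≤ centG g :=
  Subgroup.center_le_centralizer _

theorem centG_ne_top {g : G} (hg : g ∉ Subgroup.center G) : centG g ≠ ⊤ := by
  rwa [centG, Ne, Subgroup.centralizer_eq_top_iff_subset, Set.singleton_subset_iff]

theorem self_mem_zCent (g : G) : g ∈ zCent g :=
  Subgroup.mem_map.2 ⟨⟨g, Subgroup.mem_centralizer_singleton_iff.2 rfl⟩,
    Subgroup.mem_center_iff.2 fun b => Subtype.ext (Subgroup.mem_centralizer_singleton_iff.1 b.2),
    rfl⟩

theorem centG_le_centG_of_mem_zCent {x h : G} (hx : x ∈ zCent h) : centG h ≤ centG x := by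
  obtain ⟨z, hz, rfl⟩ := Subgroup.mem_map.1 hx
  exact fun b hb => Subgroup.mem_centralizer_singleton_iff.2
    (congrArg Subtype.val (Subgroup.mem_center_iff.1 hz ⟨b, hb⟩))

theorem mem_centG_of_zCent_le {x h k : G} (hle : zCent x ≤ zCent h) (hh : h ∈ centG k) :
    x ∈ centG k :=
  mem_centG_comm.1 (centG_le_centG_of_mem_zCent (hle (self_mem_zCent x)) (mem_centG_comm.1 hh))

theorem not_mem_center_of_private_mem {𝔠 : Finset (Subgroup G)} (hcov : ∀ x : G, ∃ H ∈ 𝔠, x ∈ H)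
    (hcen : ∀ K ∈ 𝔠, Subgroup.center G ≤ K) {H : Subgroup G} (hH : H ≠ ⊤) {x : G}
    (hx : ∀ K ∈ 𝔠, x ∈ K → K = H) : x ∉ Subgroup.center G := by
  obtain ⟨y, hy⟩ := not_forall.1 (mt (Subgroup.eq_top_iff' H).2 hH)
  obtain ⟨K, hK, hyK⟩ := hcov y
  exact fun hxc => hy (hx K hK (hcen K hK hxc) ▸ hyK)

theorem setOf_maximal_zCentSet :
    {H : Subgroup G | (∃ g : G, g ∉ Subgroup.center G ∧ H = zCent g) ∧
      ∀ g : G, g ∉ Subgroup.center G → H ≤ zCent g → H = zCent g} =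
    {M | Maximal (· ∈ zCentSet G) M} := by
  ext H
  refine ⟨fun ⟨hH, hmax⟩ => ⟨hH, ?_⟩, fun ⟨hH, hmax⟩ => ⟨hH, fun g hg hle => ?_⟩⟩
  · rintro _ ⟨g, hg, rfl⟩ hle
    exact (hmax g hg hle).ge
  · exact le_antisymm hle (hmax ⟨g, hg, rfl⟩ hle)

end Group

theorem stmt_13_general (𝔠 : Finset (Subgroup G))
    (hmem : ∀ H ∈ 𝔠, ∃ g : G, g ∉ Subgroup.center G ∧ H = centG g)
    (hcov : ∀ x : G, ∃ H ∈ 𝔠, x ∈ H)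
    (hirr : ∀ 𝔡 : Finset (Subgroup G), 𝔡 ⊂ 𝔠 → ¬ ∀ x : G, ∃ H ∈ 𝔡, x ∈ H) :
    𝔠.card ≤ Set.ncard {H : Subgroup G |
      (∃ g : G, g ∉ Subgroup.center G ∧ H = zCent g) ∧
      ∀ g : G, g ∉ Subgroup.center G → H ≤ zCent g → H = zCent g} := by
  rw [setOf_maximal_zCentSet, Set.ncard_eq_toFinset_card _ (Set.toFinite _)]
  have hcen : ∀ K ∈ 𝔠, Subgroup.center G ≤ K := fun K hK => by
    obtain ⟨k, -, rfl⟩ := hmem K hK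
    exact center_le_centG k
  refine Finset.card_le_card_of_forall_subsingleton
    (fun H M => ∃ x ∈ H, (∀ K ∈ 𝔠, x ∈ K → K = H) ∧ zCent x ≤ M) (fun H hH => ?_) ?_
  · obtain ⟨x, hxH, hx⟩ := exists_private_mem_of_irredundant hcov hirr hH
    obtain ⟨g, hg, rfl⟩ := hmem _ hH
    have hxc := not_mem_center_of_private_mem hcov hcen (centG_ne_top hg) hx
    obtain ⟨M, hle, hM⟩ := (Set.toFinite (zCentSet G)).exists_le_maximal ⟨x, hxc, rfl⟩
    exact ⟨M, (Set.Finite.mem_toFinset _).2 hM, x, hxH, hx, hle⟩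
  · rintro M hM H ⟨-, x, -, hx, hxM⟩ H' ⟨-, y, -, hy, hyM⟩
    obtain ⟨h, -, rfl⟩ := (Set.Finite.mem_toFinset _).1 hM |>.1
    obtain ⟨K, hK, hhK⟩ := hcov h
    obtain ⟨k, -, rfl⟩ := hmem K hK
    exact (hx _ hK (mem_centG_of_zCent_le hxM hhK)).symm.trans
      (hy _ hK (mem_centG_of_zCent_le hyM hhK))

theorem stmt_13 (hna : ∃ a b : G, a * b ≠ b * a) (𝔠 : Finset (Subgroup G))
    (hmem : ∀ H ∈ 𝔠, ∃ g : G, g ∉ Subgroup.center G ∧ H = centG g)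
    (hcov : ∀ x : G, ∃ H ∈ 𝔠, x ∈ H)
    (hirr : ∀ 𝔡 : Finset (Subgroup G), 𝔡 ⊂ 𝔠 → ¬ ∀ x : G, ∃ H ∈ 𝔡, x ∈ H) :
    𝔠.card ≤ Set.ncard {H : Subgroup G |
      (∃ g : G, g ∉ Subgroup.center G ∧ H = zCent g) ∧
      ∀ g : G, g ∉ Subgroup.center G → H ≤ zCent g → H = zCent g} :=
  stmt_13_general 𝔠 hmem hcov hirr
end

section
/- Let G be a finite F-group and a, b ∈ G \ Z(G). Then either C_G(a) ∩ Z(C_G(b)) = Z(G) or Z(C_G(b)) ≤ C_G(a). -/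
variable {G : Type*} [Group G] [Fintype G]

lemma mem_zCent_iff {g x : G} :
    x ∈ zCent g ↔ x ∈ centG g ∧ ∀ c ∈ centG g, c * x = x * c := by
  constructor
  · rintro ⟨⟨y, hy⟩, hyc, rfl⟩
    refine ⟨hy, fun c hc => ?_⟩
    have := Subgroup.mem_center_iff.mp hyc ⟨c, hc⟩
    exact congrArg Subtype.val this
  · rintro ⟨hx, hc⟩
    exact ⟨⟨x, hx⟩, Subgroup.mem_center_iff.mpr fun g => Subtype.ext (hc g.1 g.2), rfl⟩

lemma center_le_zCent (g : G) : Subgroup.center G ≤ zCent g := by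
  intro z hz
  rw [mem_zCent_iff]
  exact ⟨Subgroup.center_le_centralizer _ hz,
    fun c _ => (Subgroup.mem_center_iff.mp hz c)⟩

theorem stmt_16
    (hF : ∀ x y : G, x ∉ Subgroup.center G → y ∉ Subgroup.center G →
      centG x ≤ centG y → centG x = centG y)
    (a b : G) (ha : a ∉ Subgroup.center G) (hb : b ∉ Subgroup.center G) :
    centG a ⊓ zCent b = Subgroup.center G ∨ zCent b ≤ centG a := by
  by_cases h : centG a ⊓ zCent b ≤ Subgroup.center G
  · left
    refine le_antisymm h (le_inf (Subgroup.center_le_centralizer _) (center_le_zCent b))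
  · right
    obtain ⟨x, hx, hxZ⟩ := SetLike.not_le_iff_exists.mp h
    obtain ⟨hxa, hxb⟩ := (Subgroup.mem_inf).mp hx
    rw [mem_zCent_iff] at hxb
    -- C(b) ≤ C(x)
    have hbx : centG b ≤ centG x := by
      intro c hc
      exact Subgroup.mem_centralizer_singleton_iff.mpr (hxb.2 c hc)
    have heq : centG b = centG x := hF b x hb hxZ hbx
    -- a ∈ C(x) since x ∈ C(a)
    have hax : a ∈ centG x := by
      have : x * a = a * x := Subgroup.mem_centralizer_singleton_iff.mp hxa
      exact Subgroup.mem_centralizer_singleton_iff.mpr this.symm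
    have hab : a ∈ centG b := heq ▸ hax
    intro z hz
    rw [mem_zCent_iff] at hz
    exact Subgroup.mem_centralizer_singleton_iff.mpr (hz.2 a hab).symm
end
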